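/- Let q be transcendental over ℚ and fix c ∈ ℕ. The sequence f_n = [c·n choose n]_q of Gaussian binomial coefficients is q-holonomic: there exist d ∈ ℕ and polynomials a_0, …, a_d ∈ ℤ[u,v], not all zero, with ∑_{l=0}^{d} a_l(q, q^n) f_{n+l} = 0 for all n ∈ ℕ. -/

import Mathlib

/-- The Gaussian (q-)binomial coefficient `[n choose k]_q`. -/
noncomputable def gbin {F : Type*} [Field F] (q : F) (n k : ℕ) : F :=
  ∏ l ∈ Finset.range k, (1 - q ^ ((n : ℤ) - (l : ℤ))) / (1 - q ^ ((l : ℤ) + 1))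

/-- A sequence `f : ℕ → F` is q-holonomic (with respect to `q : F`) if it is
annihilated by a nonzero operator `∑ aₗ(q, M) Lˡ` with `aₗ ∈ ℤ[u,v]`,
where `(M f)ₙ = qⁿ fₙ` and `(L f)ₙ = f_{n+1}`. -/
def qHolonomic {F : Type*} [Field F] (q : F) (f : ℕ → F) : Prop :=
  ∃ d : ℕ, ∃ c : ℕ → MvPolynomial (Fin 2) ℤ,
    (∃ l, l ≤ d ∧ c l ≠ 0) ∧
    ∀ n : ℕ,
      ∑ l ∈ Finset.range (d + 1),
        MvPolynomial.eval₂ (Int.castRingHom F) ![q, q ^ n] (c l) * f (n + l) = 0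

/-!
For `c ≥ 1` the ratio of consecutive terms of `f n = [c n choose n]_q` is
`f (n+1) / f n = (q^(cn+1); q)_c / ((1 - q^(n+1)) (q^((c-1)n+1); q)_(c-1))`,
a rational function of `q` and `q^n`, so `f` satisfies a first-order recurrence with
coefficients in `ℤ[q, q^n]`. Transcendence of `q` keeps the `q`-factorials in the denominators of
the Gaussian binomials nonzero. For `c = 0` the sequence is `1, 0, 0, …`, annihilated by `L`.
-/

open Finset MvPolynomial

theorem Transcendental.not_isOfFinOrder {R A : Type*} [CommRing R] [Nontrivial R] [Ring A]
    [Algebra R A] {x : A} (hx : Transcendental R x) : ¬IsOfFinOrder x := by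
  intro hfin
  obtain ⟨k, hk, hxk⟩ := isOfFinOrder_iff_pow_eq_one.mp hfin
  exact hx.pow hk (hxk ▸ isAlgebraic_one)

theorem one_sub_pow_ne_zero_of_not_isOfFinOrder {R : Type*} [Ring R] {x : R}
    (hx : ¬IsOfFinOrder x) {k : ℕ} (hk : 0 < k) : 1 - x ^ k ≠ 0 :=
  sub_ne_zero.mpr fun h => hx (isOfFinOrder_iff_pow_eq_one.mpr ⟨k, hk, h.symm⟩)

section qPochhammer

variable {R : Type*} [CommRing R]

/-- The q-Pochhammer symbol `(q^a; q)_k`. -/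
def qPochhammer (q : R) (a k : ℕ) : R :=
  ∏ i ∈ range k, (1 - q ^ (a + i))

theorem qPochhammer_add (q : R) (a k l : ℕ) :
    qPochhammer q a (k + l) = qPochhammer q a k * qPochhammer q (a + k) l := by
  simp only [qPochhammer, prod_range_add, add_assoc]

theorem qPochhammer_ne_zero [IsDomain R] {q : R} (hq : ¬IsOfFinOrder q) {a : ℕ} (ha : 0 < a)
    (k : ℕ) : qPochhammer q a k ≠ 0 :=
  prod_ne_zero_iff.mpr fun i _ => one_sub_pow_ne_zero_of_not_isOfFinOrder hq (by omega)

noncomputable def qPochhammerPoly (a b k : ℕ) : MvPolynomial (Fin 2) ℤ :=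
  ∏ i ∈ range k, (1 - X 0 ^ (a + i) * X 1 ^ b)

theorem eval₂_qPochhammerPoly (q : R) (a b k n : ℕ) :
    eval₂ (Int.castRingHom R) ![q, q ^ n] (qPochhammerPoly a b k) =
      qPochhammer q (b * n + a) k := by
  simp only [qPochhammerPoly, qPochhammer, eval₂_prod, eval₂_sub, eval₂_one, eval₂_mul,
    eval₂_pow, eval₂_X, Matrix.cons_val_zero, Matrix.cons_val_one]
  refine prod_congr rfl fun i _ => ?_
  ring

theorem qPochhammerPoly_ne_zero {a : ℕ} (ha : 0 < a) (b k : ℕ) : qPochhammerPoly a b k ≠ 0 := by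
  intro h
  have := congrArg (eval (fun _ => (0 : ℤ))) h
  simp [qPochhammerPoly, ha.ne'] at this

end qPochhammer

section gbin

variable {F : Type*} [Field F]

theorem gbin_eq_zero_of_lt (q : F) {m k : ℕ} (h : m < k) : gbin q m k = 0 :=
  prod_eq_zero (mem_range.mpr h) (by simp)

theorem gbin_eq_qPochhammer_div (q : F) {m k : ℕ} (h : k ≤ m) :
    gbin q m k = qPochhammer q (m - k + 1) k / qPochhammer q 1 k := by
  rw [qPochhammer, qPochhammer, ← prod_range_reflect, ← prod_div_distrib]
  refine prod_congr rfl fun l hl => ?_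
  have hl := mem_range.mp hl
  rw [show (m : ℤ) - l = ((m - k + 1 + (k - 1 - l) : ℕ) : ℤ) by omega,
    show (l : ℤ) + 1 = ((1 + l : ℕ) : ℤ) by push_cast; ring, zpow_natCast, zpow_natCast]

theorem qPochhammer_mul_gbin_eq (q : F) (hq : ¬IsOfFinOrder q) (c n : ℕ) :
    qPochhammer q ((c + 1) * n + 1) (c + 1) * gbin q ((c + 1) * n) n =
      qPochhammer q (n + 1) 1 * qPochhammer q (c * n + 1) c *
        gbin q ((c + 1) * (n + 1)) (n + 1) := by
  rw [gbin_eq_qPochhammer_div q (by nlinarith), gbin_eq_qPochhammer_div q (by nlinarith),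
    show (c + 1) * n - n + 1 = c * n + 1 by rw [add_mul, one_mul, Nat.add_sub_cancel],
    show (c + 1) * (n + 1) - (n + 1) + 1 = c * n + 1 + c by
      rw [add_mul, one_mul, Nat.add_sub_cancel]; ring,
    qPochhammer_add q 1 n 1, add_comm 1 n]
  have hden := qPochhammer_ne_zero hq one_pos n
  have hlast := qPochhammer_ne_zero hq n.succ_pos 1
  have hsplit : qPochhammer q (c * n + 1) n * qPochhammer q ((c + 1) * n + 1) (c + 1) =
      qPochhammer q (c * n + 1) c * qPochhammer q (c * n + 1 + c) (n + 1) := by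
    rw [show (c + 1) * n + 1 = c * n + 1 + n by ring, ← qPochhammer_add, ← qPochhammer_add]
    congr 1
    omega
  field_simp
  linear_combination hsplit

end gbin

theorem qHolonomic_of_first_order {F : Type*} [Field F] {q : F} {f : ℕ → F}
    (A B : MvPolynomial (Fin 2) ℤ) (hAB : A ≠ 0 ∨ B ≠ 0)
    (hrec : ∀ n, eval₂ (Int.castRingHom F) ![q, q ^ n] A * f n =
      eval₂ (Int.castRingHom F) ![q, q ^ n] B * f (n + 1)) :
    qHolonomic q f := by
  refine ⟨1, fun l => if l = 0 then A else -B, ?_, fun n => ?_⟩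
  · rcases hAB with hA | hB
    · exact ⟨0, zero_le_one, hA⟩
    · exact ⟨1, le_rfl, neg_ne_zero.mpr hB⟩
  · simp only [sum_range_succ, sum_range_zero, if_pos, one_ne_zero, if_false, eval₂_neg, zero_add,
      add_zero, hrec n]
    ring

theorem gbin_cn_n_qHolonomic_general {F : Type*} [Field F] [Algebra ℚ F]
    (q : F) (hq : Transcendental ℚ q) (c : ℕ) :
    qHolonomic q (fun n => gbin q (c * n) n) := by
  rcases c with _ | c
  · refine qHolonomic_of_first_order 0 1 (Or.inr one_ne_zero) fun n => ?_
    simp [gbin_eq_zero_of_lt q n.succ_pos]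
  · refine qHolonomic_of_first_order (qPochhammerPoly 1 (c + 1) (c + 1))
      (qPochhammerPoly 1 1 1 * qPochhammerPoly 1 c c) (Or.inl (qPochhammerPoly_ne_zero one_pos _ _))
      fun n => ?_
    rw [eval₂_mul, eval₂_qPochhammerPoly, eval₂_qPochhammerPoly, eval₂_qPochhammerPoly, one_mul]
    exact qPochhammer_mul_gbin_eq q hq.not_isOfFinOrder c n

theorem gbin_cn_n_qHolonomic {F : Type*} [Field F] [CharZero F] [Algebra ℚ F]
    (q : F) (hq : Transcendental ℚ q) (c : ℕ) :
    qHolonomic q (fun n => gbin q (c * n) n) :=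
  gbin_cn_n_qHolonomic_general q hq c
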